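/- arXiv:2208.06319 — 3 statements merged into one kernel-verified Lean document; each statement's English description precedes it below -/
import Mathlib

section
/- Let b : T × T → ℚ/ℤ be a symmetric bilinear form on a finite abelian group T. Then there exists a function ψ : T → ℚ/ℤ with ψ(x+y) − ψ(x) − ψ(y) = b(x,y) for all x,y (an enhancement of b). -/
/-!
On `A × T` the twisted sum `(a, x) + (a', y) = (a + a' - b x y, x + y)` is an abelian group law
(bilinearity gives associativity, symmetry commutativity), and `a ↦ (a, 0)` embeds `A` into it.
When `A` is divisible it is an injective `ℤ`-module, so this embedding has a retraction `r`; then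
`ψ x = r (0, x)` works, because `(0, x) + (0, y) = (-b x y, 0) + (0, x + y)`.
-/

section

variable {A T : Type*} [AddCommGroup A] [AddCommGroup T]

/-- The central extension of `T` by `A` with cocycle `-b`; `hb` is recorded in the type only so
that the commutative group law can be an instance. -/
def CentralExtension (b : T →+ T →+ A) (_hb : ∀ x y, b x y = b y x) : Type _ := A × T

namespace CentralExtension

variable (b : T →+ T →+ A) (hb : ∀ x y, b x y = b y x)

instance : Zero (CentralExtension b hb) := ⟨((0 : A), (0 : T))⟩

instance : Add (CentralExtension b hb) := ⟨fun p q => (p.1 + q.1 - b p.2 q.2, p.2 + q.2)⟩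

instance : Neg (CentralExtension b hb) := ⟨fun p => (-p.1 - b p.2 p.2, -p.2)⟩

def mk (a : A) (x : T) : CentralExtension b hb := (a, x)

variable {b hb}

@[ext]
lemma ext {p q : CentralExtension b hb} (h₁ : p.1 = q.1) (h₂ : p.2 = q.2) : p = q := Prod.ext h₁ h₂

@[simp] lemma fst_mk (a : A) (x : T) : (mk b hb a x).1 = a := rfl
@[simp] lemma snd_mk (a : A) (x : T) : (mk b hb a x).2 = x := rfl
@[simp] lemma fst_zero : (0 : CentralExtension b hb).1 = 0 := rfl
@[simp] lemma snd_zero : (0 : CentralExtension b hb).2 = 0 := rfl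
@[simp] lemma fst_add (p q : CentralExtension b hb) : (p + q).1 = p.1 + q.1 - b p.2 q.2 := rfl
@[simp] lemma snd_add (p q : CentralExtension b hb) : (p + q).2 = p.2 + q.2 := rfl
@[simp] lemma fst_neg (p : CentralExtension b hb) : (-p).1 = -p.1 - b p.2 p.2 := rfl
@[simp] lemma snd_neg (p : CentralExtension b hb) : (-p).2 = -p.2 := rfl

instance : AddCommGroup (CentralExtension b hb) where
  add_assoc p q r := by ext <;> simp <;> abel
  zero_add p := by ext <;> simp
  add_zero p := by ext <;> simp
  neg_add_cancel p := by ext <;> simp; abel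
  add_comm p q := by ext <;> simp [hb p.2, add_comm]
  nsmul := nsmulRec
  zsmul := zsmulRec

variable (b hb)

def inl : A →+ CentralExtension b hb where
  toFun a := mk b hb a 0
  map_zero' := rfl
  map_add' a a' := by ext <;> simp

variable {b hb}

@[simp] lemma inl_apply (a : A) : inl b hb a = mk b hb a 0 := rfl

lemma inl_injective : Function.Injective (inl b hb) := fun _ _ h => congrArg Prod.fst h

lemma mk_zero_add_mk_zero (x y : T) :
    mk b hb 0 x + mk b hb 0 y = inl b hb (-b x y) + mk b hb 0 (x + y) := by
  ext <;> simp

end CentralExtension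

open CentralExtension in
theorem exists_enhancement_of_divisibleBy [DivisibleBy A ℤ] (b : T →+ T →+ A)
    (hb : ∀ x y, b x y = b y x) : ∃ ψ : T → A, ∀ x y, ψ (x + y) - ψ x - ψ y = b x y := by
  obtain ⟨r, hr⟩ := Module.Baer.extension_property_addMonoidHom (Module.Baer.of_divisible A)
    (inl b hb) inl_injective (AddMonoidHom.id A)
  refine ⟨fun x => r (mk b hb 0 x), fun x y => ?_⟩
  have hsplit := congrArg r (mk_zero_add_mk_zero (hb := hb) x y)
  rw [map_add, map_add, ← AddMonoidHom.comp_apply, hr, AddMonoidHom.id_apply] at hsplit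
  dsimp only
  rw [sub_sub, hsplit]
  abel

end

theorem exists_enhancement_general {T : Type*} [AddCommGroup T]
    (b : T → T → AddCircle (1 : ℚ))
    (hsymm : ∀ x y, b x y = b y x)
    (hadd₁ : ∀ x y z, b (x + y) z = b x z + b y z)
    (hadd₂ : ∀ x y z, b x (y + z) = b x y + b x z) :
    ∃ ψ : T → AddCircle (1 : ℚ), ∀ x y, ψ (x + y) - ψ x - ψ y = b x y :=
  exists_enhancement_of_divisibleBy
    (AddMonoidHom.mk' (fun x => AddMonoidHom.mk' (b x) (hadd₂ x)) fun x y => by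
      ext z; exact hadd₁ x y z)
    hsymm

/-- Every symmetric bilinear form `b : T × T → ℚ/ℤ` on a finite abelian group
has an enhancement `ψ` with `ψ(x+y) - ψ(x) - ψ(y) = b(x,y)`. -/
theorem exists_enhancement {T : Type*} [AddCommGroup T] [Finite T]
    (b : T → T → AddCircle (1 : ℚ))
    (hsymm : ∀ x y, b x y = b y x)
    (hadd₁ : ∀ x y z, b (x + y) z = b x z + b y z)
    (hadd₂ : ∀ x y z, b x (y + z) = b x y + b x z) :
    ∃ ψ : T → AddCircle (1 : ℚ), ∀ x y, ψ (x + y) - ψ x - ψ y = b x y :=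
  exists_enhancement_general b hsymm hadd₁ hadd₂
end

section
/- Let ψ : T → ℝ/ℤ be 2-linear on a finite abelian group T and K ⊆ T a subgroup with ψ|_K = 0. Then K ⊆ K^⊥, ψ induces a well-defined function ψ̄ : K^⊥/K → ℝ/ℤ, and G(ψ) = |K| · G(ψ̄). -/
noncomputable def e (x : AddCircle (1 : ℝ)) : ℂ := AddCircle.toCircle x

def bform {T M : Type*} [AddCommGroup T] [AddCommGroup M] (ψ : T → M) (x y : T) : M :=
  ψ (x + y) - ψ x - ψ y

def IsTwoLinear {T M : Type*} [AddCommGroup T] [AddCommGroup M] (ψ : T → M) : Prop :=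
  ∀ x y z : T, bform ψ (x + y) z = bform ψ x z + bform ψ y z

lemma e_add (x y : AddCircle (1 : ℝ)) : e (x + y) = e x * e y := by
  simp [e, AddCircle.toCircle_add]

lemma e_zero : e (0 : AddCircle (1 : ℝ)) = 1 := by
  simp [e]

lemma e_eq_one {x : AddCircle (1 : ℝ)} (h : e x = 1) : x = 0 := by
  apply AddCircle.injective_toCircle (one_ne_zero : (1:ℝ) ≠ 0)
  rw [AddCircle.toCircle_zero]
  exact Subtype.coe_injective (by simpa [e] using h)

/-- Let `ψ : T → ℝ/ℤ` be 2-linear on a finite abelian group and `K ≤ T` a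
subgroup with `ψ|_K = 0`.  Then `K ⊆ K^⊥`, `ψ` induces a well-defined function
`ψ̄` on `K^⊥/K`, and `G(ψ) = |K| · G(ψ̄)`. -/
theorem gauss_sum_subgroup {T : Type*} [AddCommGroup T] [Finite T]
    (ψ : T → AddCircle (1 : ℝ)) (hψ : IsTwoLinear ψ)
    (K : AddSubgroup T) (hK : ∀ k ∈ K, ψ k = 0) :
    ∃ Kperp : AddSubgroup T,
      (Kperp : Set T) = {t : T | ∀ k ∈ K, bform ψ t k = 0} ∧
      K ≤ Kperp ∧
      ∃ ψbar : Kperp ⧸ K.addSubgroupOf Kperp → AddCircle (1 : ℝ),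
        (∀ x : Kperp, ψbar (QuotientAddGroup.mk x) = ψ (x : T)) ∧
        ∑ᶠ t : T, e (ψ t) = (Nat.card K : ℂ) * ∑ᶠ q, e (ψbar q) := by
  classical
  haveI : Fintype T := Fintype.ofFinite T
  have hψ0 : ψ 0 = 0 := hK 0 K.zero_mem
  have hsymm : ∀ x y, bform ψ x y = bform ψ y x := by
    intro x y
    simp only [bform, add_comm x y]
    abel
  have hadd2 : ∀ x y z : T, bform ψ x (y + z) = bform ψ x y + bform ψ x z := by
    intro x y z
    rw [hsymm x (y + z), hψ y z x, hsymm y x, hsymm z x]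
  have hb0 : ∀ x, bform ψ x 0 = 0 := by
    intro x; simp [bform, hψ0]
  have h0b : ∀ k, bform ψ 0 k = 0 := by
    intro k; simp [bform, hψ0]
  refine ⟨{ carrier := {t : T | ∀ k ∈ K, bform ψ t k = 0}
            zero_mem' := fun k hk => h0b k
            add_mem' := fun {a b} ha hb k hk => by
              rw [hψ a b k, ha k hk, hb k hk, add_zero]
            neg_mem' := fun {a} ha k hk => by
              have h := hψ a (-a) k
              rw [add_neg_cancel, h0b, ha k hk, zero_add] at h
              exact h.symm }, rfl, ?_, ?_⟩
  · intro x hx k hk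
    show bform ψ x k = 0
    simp [bform, hK _ (K.add_mem hx hk), hK _ hx, hK _ hk]
  set Kperp : AddSubgroup T :=
    { carrier := {t : T | ∀ k ∈ K, bform ψ t k = 0}
      zero_mem' := fun k hk => h0b k
      add_mem' := fun {a b} ha hb k hk => by
        rw [hψ a b k, ha k hk, hb k hk, add_zero]
      neg_mem' := fun {a} ha k hk => by
        have h := hψ a (-a) k
        rw [add_neg_cancel, h0b, ha k hk, zero_add] at h
        exact h.symm } with hKperp
  have hmemKp : ∀ t : T, t ∈ Kperp ↔ ∀ k ∈ K, bform ψ t k = 0 := fun t => Iff.rfl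
  -- invariance of ψ under translation by K, on Kperp
  have hinv : ∀ t : T, t ∈ Kperp → ∀ k ∈ K, ψ (t + k) = ψ t := by
    intro t ht k hk
    have h := ht k hk
    rw [bform, hK k hk, sub_zero, sub_eq_zero] at h
    exact h
  set K' : AddSubgroup Kperp := K.addSubgroupOf Kperp with hK'
  -- well-definedness
  have wd : ∀ a b : Kperp, QuotientAddGroup.leftRel K' a b → ψ (a : T) = ψ (b : T) := by
    intro a b hab
    have hmem0 : (-a + b : Kperp) ∈ K' := QuotientAddGroup.leftRel_apply.mp hab
    have hmem : ((-a + b : Kperp) : T) ∈ K := AddSubgroup.mem_addSubgroupOf.mp hmem0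
    have h2 : ψ ((a : T) + ((-a + b : Kperp) : T)) = ψ (a : T) := hinv a a.2 _ hmem
    exact (by simpa using h2 : ψ (b : T) = ψ (a : T)).symm
  refine ⟨Quotient.lift (fun x : Kperp => ψ (x : T)) wd, fun x => rfl, ?_⟩
  haveI : Fintype Kperp := Fintype.ofFinite Kperp
  haveI : Fintype K := Fintype.ofFinite K
  haveI : Fintype K' := Fintype.ofFinite K'
  haveI : Fintype (Kperp ⧸ K') := Fintype.ofFinite _
  set ψbar : Kperp ⧸ K' → AddCircle (1 : ℝ) := Quotient.lift (fun x : Kperp => ψ (x : T)) wd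
    with hψbar
  rw [finsum_eq_sum_of_fintype, finsum_eq_sum_of_fintype]
  have hcardK : (Nat.card K : ℂ) ≠ 0 := Nat.cast_ne_zero.2 Nat.card_pos.ne'
  -- the characters
  set χ : T → AddChar K ℂ := fun t =>
    { toFun := fun k => e (bform ψ t k)
      map_zero_eq_one' := by simp [hb0, e_zero]
      map_add_eq_mul' := fun a b => by
        show e (bform ψ t ((a : T) + (b : T))) = _
        rw [hadd2, e_add] } with hχ
  have hsplit : ∀ (t : T) (k : K), e (ψ (t + k)) = e (ψ t) * e (bform ψ t k) := by
    intro t k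
    have h : ψ (t + k) = ψ t + bform ψ t k := by
      rw [bform, hK _ k.2]
      abel
    rw [h, e_add]
  have hchisum : ∀ t : T, ∑ k : K, e (bform ψ t k) =
      if t ∈ Kperp then (Nat.card K : ℂ) else 0 := by
    intro t
    by_cases ht : t ∈ Kperp
    · rw [if_pos ht]
      have : ∀ k : K, e (bform ψ t k) = 1 := fun k => by
        rw [ht k k.2, e_zero]
      rw [Finset.sum_congr rfl fun k _ => this k]
      simp [Nat.card_eq_fintype_card, Finset.card_univ]
    · rw [if_neg ht]
      have hne : χ t ≠ 0 := by
        rw [AddChar.ne_zero_iff]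
        rw [hmemKp] at ht
        push_neg at ht
        obtain ⟨k, hkK, hkb⟩ := ht
        exact ⟨⟨k, hkK⟩, fun h => hkb (e_eq_one h)⟩
      have := AddChar.sum_eq_zero_iff_ne_zero.mpr hne
      exact this
  -- main computation: sum over T equals sum over Kperp
  have hstep1 : (Nat.card K : ℂ) * ∑ t : T, e (ψ t) =
      (Nat.card K : ℂ) * ∑ x : Kperp, e (ψ (x : T)) := by
    have lhs : ∑ k : K, ∑ t : T, e (ψ (t + k)) = (Nat.card K : ℂ) * ∑ t : T, e (ψ t) := by
      have : ∀ k : K, ∑ t : T, e (ψ (t + (k : T))) = ∑ t : T, e (ψ t) := fun k =>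
        Equiv.sum_comp (Equiv.addRight (k : T)) (fun t => e (ψ t))
      rw [Finset.sum_congr rfl fun k _ => this k, Finset.sum_const, Finset.card_univ,
        nsmul_eq_mul, Nat.card_eq_fintype_card]
    have rhs : ∑ k : K, ∑ t : T, e (ψ (t + k)) =
        (Nat.card K : ℂ) * ∑ x : Kperp, e (ψ (x : T)) := by
      rw [Finset.sum_comm]
      have : ∀ t : T, ∑ k : K, e (ψ (t + k)) =
          if t ∈ Kperp then (Nat.card K : ℂ) * e (ψ t) else 0 := by
        intro t
        rw [Finset.sum_congr rfl fun k _ => hsplit t k, ← Finset.mul_sum, hchisum t]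
        by_cases ht : t ∈ Kperp <;> simp [ht, mul_comm]
      rw [Finset.sum_congr rfl fun t _ => this t]
      rw [← Finset.sum_filter]
      rw [Finset.sum_subtype (p := fun x => x ∈ Kperp) (Finset.univ.filter (· ∈ Kperp))
        (fun x => by simp) (fun t => (Nat.card K : ℂ) * e (ψ t))]
      rw [← Finset.mul_sum]
    rw [← lhs, rhs]
  have hstep1' : ∑ t : T, e (ψ t) = ∑ x : Kperp, e (ψ (x : T)) :=
    mul_left_cancel₀ hcardK hstep1
  -- fiberwise over the quotient
  have hfiber : ∀ q : Kperp ⧸ K',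
      ∑ x : {x : Kperp // QuotientAddGroup.mk x = q}, e (ψ ((x : Kperp) : T)) =
        (Nat.card K : ℂ) * e (ψbar q) := by
    intro q
    induction q using QuotientAddGroup.induction_on with
    | H x0 =>
      have hconst : ∀ x : {x : Kperp // QuotientAddGroup.mk (s := K') x
            = QuotientAddGroup.mk (s := K') x0},
          e (ψ ((x : Kperp) : T)) = e (ψbar (QuotientAddGroup.mk x0)) := by
        intro x
        exact congrArg (fun q => e (ψbar q)) x.2
      rw [Finset.sum_congr rfl fun x _ => hconst x, Finset.sum_const, Finset.card_univ,
        nsmul_eq_mul]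
      congr 1
      have equivFiber : K' ≃ {x : Kperp // QuotientAddGroup.mk (s := K') x
          = QuotientAddGroup.mk (s := K') x0} :=
        { toFun := fun k => ⟨x0 + k, by
            rw [QuotientAddGroup.eq_iff_sub_mem]
            simp [k.2]⟩
          invFun := fun x => ⟨(x : Kperp) - x0, by
            have := (QuotientAddGroup.eq_iff_sub_mem).mp x.2
            exact this⟩
          left_inv := fun k => by
            ext
            simp
          right_inv := fun x => by
            ext
            simp }
      have hKK' : Fintype.card K' = Fintype.card K := by
        have hle : K ≤ Kperp := by
          intro x hx k hk
          show bform ψ x k = 0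
          simp [bform, hK _ (K.add_mem hx hk), hK _ hx, hK _ hk]
        exact Fintype.card_congr (AddSubgroup.addSubgroupOfEquivOfLe hle).toEquiv
      rw [← Fintype.card_congr equivFiber, hKK', Nat.card_eq_fintype_card]
  calc ∑ t : T, e (ψ t) = ∑ x : Kperp, e (ψ (x : T)) := hstep1'
    _ = ∑ q : Kperp ⧸ K', ∑ x : {x : Kperp // QuotientAddGroup.mk x = q},
          e (ψ ((x : Kperp) : T)) := (Fintype.sum_fiberwise _ _).symm
    _ = ∑ q : Kperp ⧸ K', (Nat.card K : ℂ) * e (ψbar q) :=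
          Finset.sum_congr rfl fun q _ => hfiber q
    _ = (Nat.card K : ℂ) * ∑ q : Kperp ⧸ K', e (ψbar q) := by rw [← Finset.mul_sum]
end

section
/- Let T be a finite abelian p-group for a prime p ≡ 3 mod 4, and ψ : T → ℚ/ℤ a quadratic 2-linear function. Then ψ ⊥ ψ is isometric to (−ψ) ⊥ (−ψ) on T ⊕ T. -/
def IsQuadratic {T : Type*} [AddCommGroup T] (ψ : T → AddCircle (1 : ℚ)) : Prop :=
  ∀ (a : ℤ) (x : T), ψ (a • x) = (a ^ 2) • ψ x

/-!
Let `p ^ N` kill `T`; then `p ^ (2N)` kills the values of `ψ`, since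
`p ^ (2N) • ψ x = ψ (p ^ N • x)`.
Choose integers `a, b` with `a² + b² ≡ -1 mod p ^ (2N)`: `-1` is a sum of two squares mod `p`,
and Hensel lifting applies as `2a` is a unit mod the odd prime `p`. The rotation
`(x, y) ↦ (a x + b y, -b x + a y)` is then an automorphism of `T × T`, and the cross terms
`± ab · bform ψ x y` cancel in `ψ ⊥ ψ`, leaving `(a² + b²)(ψ x + ψ y) = -(ψ x + ψ y)`.
-/

theorem exists_sq_add_dvd_pow_succ_of_dvd_pow {p a c : ℤ} (hcop : IsCoprime (2 * a) p) {k : ℕ}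
    (h : p ^ (k + 1) ∣ a ^ 2 + c) : ∃ t : ℤ, p ^ (k + 2) ∣ (a + t * p ^ (k + 1)) ^ 2 + c := by
  obtain ⟨d, hd⟩ := h
  obtain ⟨u, v, huv⟩ := hcop
  refine ⟨-d * u, d * v + (d * u) ^ 2 * p ^ k, ?_⟩
  linear_combination hd - d * p ^ (k + 1) * huv

theorem exists_sq_add_dvd_pow {p a c : ℤ} (hcop : IsCoprime (2 * a) p) (h : p ∣ a ^ 2 + c)
    (k : ℕ) : ∃ a' : ℤ, p ^ k ∣ a' ^ 2 + c := by
  suffices ∀ k : ℕ, ∃ a' : ℤ, IsCoprime (2 * a') p ∧ p ^ (k + 1) ∣ a' ^ 2 + c by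
    obtain ⟨a', -, ha'⟩ := this k
    exact ⟨a', (pow_dvd_pow p k.le_succ).trans ha'⟩
  intro k
  induction k with
  | zero => exact ⟨a, hcop, by rwa [zero_add, pow_one]⟩
  | succ k ih =>
    obtain ⟨a', hcop', ha'⟩ := ih
    obtain ⟨t, ht⟩ := exists_sq_add_dvd_pow_succ_of_dvd_pow hcop' ha'
    refine ⟨a' + t * p ^ (k + 1), ?_, ht⟩
    rw [show 2 * (a' + t * p ^ (k + 1)) = 2 * a' + p * (2 * t * p ^ k) by ring]
    exact hcop'.add_mul_left_left _

theorem exists_sq_add_sq_add_one_dvd_pow {p : ℕ} (hp : p.Prime) (hp2 : p ≠ 2) (k : ℕ) :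
    ∃ a b : ℤ, (p : ℤ) ^ k ∣ a ^ 2 + b ^ 2 + 1 := by
  have := Fact.mk hp
  have h2 : (2 : ZMod p) ≠ 0 := Ring.two_ne_zero (by rwa [ZMod.ringChar_zmod_n])
  obtain ⟨u, v, huv⟩ := ZMod.sq_add_sq p (-1)
  -- one of `u, v` is nonzero since `0 ≠ -1` in `ZMod p`; by symmetry it is `u`
  wlog hu : u ≠ 0 generalizing u v
  · obtain ⟨b, a, hba⟩ := this v u (by rw [← huv]; ring) (by rintro rfl; simp_all)
    exact ⟨a, b, by rwa [add_comm (a ^ 2)]⟩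
  obtain ⟨a, rfl⟩ := ZMod.intCast_surjective u
  obtain ⟨b, rfl⟩ := ZMod.intCast_surjective v
  have hcop : IsCoprime (2 * a) (p : ℤ) := by
    rw [isCoprime_comm, Prime.coprime_iff_not_dvd (Nat.prime_iff_prime_int.mp hp),
      ← ZMod.intCast_zmod_eq_zero_iff_dvd]
    push_cast
    exact mul_ne_zero h2 hu
  have hdvd : (p : ℤ) ∣ a ^ 2 + (b ^ 2 + 1) := by
    rw [← ZMod.intCast_zmod_eq_zero_iff_dvd]
    push_cast
    rw [← add_assoc, huv, neg_add_cancel]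
  obtain ⟨a', ha'⟩ := exists_sq_add_dvd_pow hcop hdvd k
  exact ⟨a', b, by rwa [← add_assoc] at ha'⟩

theorem exists_pow_smul_eq_zero_of_finite {T : Type*} [AddMonoid T] [Finite T] (p : ℕ)
    (hT : ∀ x : T, ∃ n : ℕ, p ^ n • x = 0) : ∃ N : ℕ, ∀ x : T, p ^ N • x = 0 := by
  choose n hn using hT
  obtain ⟨x₀, hx₀⟩ := Finite.exists_max n
  refine ⟨n x₀, fun x => ?_⟩
  obtain ⟨c, hc⟩ := pow_dvd_pow p (hx₀ x)
  rw [hc, mul_nsmul, hn, nsmul_zero]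

theorem zsmul_eq_neg_of_dvd_add_one {G : Type*} [AddCommGroup G] {m s : ℤ} {y : G}
    (hm : m • y = 0) (hs : m ∣ s + 1) : s • y = -y := by
  obtain ⟨c, hc⟩ := hs
  rw [eq_neg_iff_add_eq_zero, ← add_one_zsmul, hc, mul_comm, mul_zsmul, hm, zsmul_zero]

section QuadraticFunction

variable {T M : Type*} [AddCommGroup T] [AddCommGroup M]

theorem apply_add_eq_add_bform (ψ : T → M) (x y : T) : ψ (x + y) = ψ x + ψ y + bform ψ x y := by
  rw [bform]; abel

theorem bform_comm (ψ : T → M) (x y : T) : bform ψ x y = bform ψ y x := by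
  simp only [bform, add_comm x y]; abel

theorem IsTwoLinear.bform_zsmul_left {ψ : T → M} (h2 : IsTwoLinear ψ) (n : ℤ) (x y : T) :
    bform ψ (n • x) y = n • bform ψ x y :=
  map_zsmul (AddMonoidHom.mk' (bform ψ · y) (h2 · · y)) n x

theorem IsTwoLinear.bform_zsmul_zsmul {ψ : T → M} (h2 : IsTwoLinear ψ) (a b : ℤ) (x y : T) :
    bform ψ (a • x) (b • y) = (a * b) • bform ψ x y := by
  rw [h2.bform_zsmul_left, bform_comm, h2.bform_zsmul_left, bform_comm, mul_zsmul]

theorem IsQuadratic.sq_zsmul_eq_zero {ψ : T → AddCircle (1 : ℚ)} (hq : IsQuadratic ψ) {n : ℤ}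
    {x : T} (hx : n • x = 0) : n ^ 2 • ψ x = 0 := by
  have hψ0 : ψ 0 = 0 := by simpa using hq 0 0
  rw [← hq, hx, hψ0]

theorem IsQuadratic.apply_zsmul_add_zsmul {ψ : T → AddCircle (1 : ℚ)} (h2 : IsTwoLinear ψ)
    (hq : IsQuadratic ψ) (a b : ℤ) (x y : T) :
    ψ (a • x + b • y) = a ^ 2 • ψ x + b ^ 2 • ψ y + (a * b) • bform ψ x y := by
  rw [apply_add_eq_add_bform ψ, hq, hq, h2.bform_zsmul_zsmul]

theorem IsQuadratic.apply_rotation_add {ψ : T → AddCircle (1 : ℚ)} (h2 : IsTwoLinear ψ)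
    (hq : IsQuadratic ψ) (a b : ℤ) (x y : T) :
    ψ (a • x + b • y) + ψ ((-b) • x + a • y) = (a ^ 2 + b ^ 2) • (ψ x + ψ y) := by
  rw [hq.apply_zsmul_add_zsmul h2, hq.apply_zsmul_add_zsmul h2]
  module

end QuadraticFunction

section Rotation

variable {T : Type*} [AddCommGroup T]

def rotationHom (a b : ℤ) : T × T →+ T × T :=
  AddMonoidHom.mk' (fun z => (a • z.1 + b • z.2, (-b) • z.1 + a • z.2)) fun z w => by
    ext <;> simp only [Prod.fst_add, Prod.snd_add, smul_add] <;> abel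

@[simp]
theorem rotationHom_apply (a b : ℤ) (z : T × T) :
    rotationHom a b z = (a • z.1 + b • z.2, (-b) • z.1 + a • z.2) := rfl

theorem rotationHom_rotationHom_neg (a b : ℤ) (z : T × T) :
    rotationHom a b (rotationHom (-a) b z) = (-(a ^ 2 + b ^ 2)) • z := by
  ext <;> simp only [rotationHom_apply, Prod.smul_fst, Prod.smul_snd] <;> module

theorem rotationHom_comp_rotationHom_neg {a b : ℤ} (h : ∀ x : T, (a ^ 2 + b ^ 2) • x = -x) :
    (rotationHom a b).comp (rotationHom (-a) b) = AddMonoidHom.id (T × T) := by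
  ext1 z
  rw [AddMonoidHom.comp_apply, rotationHom_rotationHom_neg, neg_zsmul]
  ext <;> simp [h]

def rotationEquiv (a b : ℤ) (h : ∀ x : T, (a ^ 2 + b ^ 2) • x = -x) : T × T ≃+ T × T :=
  (rotationHom a b).toAddEquiv (rotationHom (-a) b)
    (by simpa using rotationHom_comp_rotationHom_neg (a := -a) (b := b) (by simpa using h))
    (rotationHom_comp_rotationHom_neg h)

@[simp]
theorem rotationEquiv_apply (a b : ℤ) (h : ∀ x : T, (a ^ 2 + b ^ 2) • x = -x) (z : T × T) :
    rotationEquiv a b h z = rotationHom a b z := rfl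

end Rotation

/-- If `T` is a finite abelian `p`-group with `p ≡ 3 mod 4` prime and `ψ` is a
quadratic 2-linear function, then `ψ ⊥ ψ ≅ (-ψ) ⊥ (-ψ)` on `T ⊕ T`. -/
theorem quadratic_double_iso_neg_of_three_mod_four {T : Type*} [AddCommGroup T]
    [Finite T] (p : ℕ) (hp : p.Prime) (hp4 : p % 4 = 3)
    (hT : ∀ x : T, ∃ n : ℕ, p ^ n • x = 0)
    (ψ : T → AddCircle (1 : ℚ)) (h2 : IsTwoLinear ψ) (hq : IsQuadratic ψ) :
    ∃ h : T × T ≃+ T × T,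
      ∀ z : T × T, -ψ (h z).1 + -ψ (h z).2 = ψ z.1 + ψ z.2 := by
  obtain ⟨N, hN⟩ := exists_pow_smul_eq_zero_of_finite p hT
  have hN' : ∀ x : T, (p : ℤ) ^ N • x = 0 := by exact_mod_cast hN
  obtain ⟨a, b, hab⟩ := exists_sq_add_sq_add_one_dvd_pow hp (by omega) (N * 2)
  rw [pow_mul] at hab
  have hT' : ∀ x : T, (a ^ 2 + b ^ 2) • x = -x := fun x =>
    zsmul_eq_neg_of_dvd_add_one (hN' x) ((dvd_pow_self _ two_ne_zero).trans hab)
  have hψ : ∀ x : T, (a ^ 2 + b ^ 2) • ψ x = -ψ x := fun x =>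
    zsmul_eq_neg_of_dvd_add_one (hq.sq_zsmul_eq_zero (hN' x)) hab
  refine ⟨rotationEquiv a b hT', fun z => ?_⟩
  rw [rotationEquiv_apply, rotationHom_apply, ← neg_add, hq.apply_rotation_add h2, smul_add,
    hψ, hψ, neg_add, neg_neg, neg_neg]
end
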